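/- arXiv:1201.3411 — 3 statements merged into one kernel-verified Lean document; each statement's English description precedes it below -/
import Mathlib

section
/- Let A be a free abelian group of finite rank and t an involution (automorphism of order dividing 2) acting on A. Let A^+ and A^- denote the subgroups of elements fixed and negated by t, respectively. If the induced action of t on A/2A has exactly r Jordan blocks of size 2 in its Jordan canonical form over the field with 2 elements, then the quotient A/(A^+ + A^-) is an elementary abelian 2-group of rank r. -/
open Pointwise

/-- If the involution `t` on the finite-rank free abelian group `A` has exactly `r`
Jordan blocks of size 2 on `A/2A` (equivalently, the image of `t - 1` on `A/2A` has
`F₂`-dimension `r`), then `A/(A⁺ + A⁻)` is elementary abelian of rank `r`. -/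
theorem stmt_0 (A : Type*) [AddCommGroup A]
    [Module.Free ℤ A] [Module.Finite ℤ A]
    (t : A →ₗ[ℤ] A) (ht : t ∘ₗ t = LinearMap.id) (r : ℕ)
    (two : Submodule ℤ A) (htwo : two = (2 : ℤ) • (⊤ : Submodule ℤ A))
    (hr : Nat.card (LinearMap.range (two.mkQ ∘ₗ (t - LinearMap.id))) = 2 ^ r) :
    Nat.card (A ⧸ (LinearMap.ker (t - LinearMap.id) ⊔ LinearMap.ker (t + LinearMap.id)))
        = 2 ^ r
      ∧ ∀ x : A ⧸ (LinearMap.ker (t - LinearMap.id) ⊔ LinearMap.ker (t + LinearMap.id)),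
          x + x = 0 := by
  have ht' : ∀ a : A, t (t a) = a := by
    intro a
    have := congrArg (fun f : A →ₗ[ℤ] A => f a) ht
    simpa using this
  set S := LinearMap.ker (t - LinearMap.id) ⊔ LinearMap.ker (t + LinearMap.id) with hS
  set f : A →ₗ[ℤ] A ⧸ two := two.mkQ ∘ₗ (t - LinearMap.id) with hf
  have hmemtwo : ∀ a : A, a ∈ two ↔ ∃ y : A, (2 : ℤ) • y = a := by
    intro a
    rw [htwo, ← SetLike.mem_coe, Submodule.coe_pointwise_smul, Set.mem_smul_set]
    simp
  have hker : LinearMap.ker f = S := by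
    ext x
    simp only [hf, LinearMap.mem_ker, LinearMap.comp_apply, Submodule.mkQ_apply,
      Submodule.Quotient.mk_eq_zero]
    constructor
    · intro hx
      rcases (hmemtwo _).mp hx with ⟨y, hy⟩
      simp only [LinearMap.sub_apply, LinearMap.id_apply] at hy
      -- apply t to hy : 2 • y = t x - x
      have hy2 : (2 : ℤ) • t y = x - t x := by
        have := congrArg t hy
        rw [map_smul, map_sub, ht'] at this
        simpa using this
      have hyneg : t y = -y := by
        have h2 : (2 : ℤ) • (t y + y) = 0 := by
          rw [smul_add, hy2, hy]
          abel
        have := smul_eq_zero.mp h2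
        rcases this with h | h
        · norm_num at h
        · linear_combination (norm := abel) h
      -- x = (x + y) + (-y)
      have h1 : x + y ∈ LinearMap.ker (t - LinearMap.id) := by
        simp only [LinearMap.mem_ker, LinearMap.sub_apply, LinearMap.id_apply, map_add]
        have hty : t x = x + (2 : ℤ) • y := by rw [hy]; abel
        rw [hty, hyneg, two_smul]
        abel
      have h2 : -y ∈ LinearMap.ker (t + LinearMap.id) := by
        simp only [LinearMap.mem_ker, LinearMap.add_apply, LinearMap.id_apply, map_neg, hyneg]
        abel
      have : x = (x + y) + (-y) := by abel
      rw [hS, this]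
      exact Submodule.add_mem_sup h1 h2
    · intro hx
      rw [hS] at hx
      rcases Submodule.mem_sup.mp hx with ⟨a, ha, b, hb, rfl⟩
      simp only [LinearMap.mem_ker, LinearMap.sub_apply, LinearMap.add_apply,
        LinearMap.id_apply] at ha hb
      have hta : t a = a := by linear_combination (norm := abel) ha
      have htb : t b = -b := by linear_combination (norm := abel) hb
      apply (hmemtwo _).mpr
      refine ⟨-b, ?_⟩
      simp only [LinearMap.sub_apply, LinearMap.id_apply, map_add, hta, htb, two_smul]
      abel
  constructor
  · have e := f.quotKerEquivRange
    rw [hker] at e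
    rw [← hr]
    exact Nat.card_congr e.toEquiv
  · intro x
    induction x using Submodule.Quotient.induction_on with
    | _ a =>
      rw [← Submodule.Quotient.mk_add, Submodule.Quotient.mk_eq_zero]
      have h1 : a + t a ∈ LinearMap.ker (t - LinearMap.id) := by
        simp only [LinearMap.mem_ker, LinearMap.sub_apply, LinearMap.id_apply, map_add, ht']
        abel
      have h2 : a - t a ∈ LinearMap.ker (t + LinearMap.id) := by
        simp only [LinearMap.mem_ker, LinearMap.add_apply, LinearMap.id_apply, map_sub, ht']
        abel
      have : a + a = (a + t a) + (a - t a) := by abel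
      rw [this]
      exact Submodule.add_mem_sup h1 h2
end

section
/- Let A be a free abelian group of finite rank with involution t, fixed subgroup A^+, negated subgroup A^-. Let B be the subgroup with 2A ≤ B ≤ A such that B/2A is the fixed-point subspace of the induced action of t on A/2A. Then B = A^+ + A^-. -/
/-!
If `t a - a = 2 x`, applying the involution `t` negates `t a - a`, so `2 t x = -2 x` and, `A`
having no `2`-torsion, `t x = -x`. Then `a = (a + x) + (-x)` with `t (a + x) = a + 2 x - x = a + x`.
Conversely `t a - a` is `0` on `A⁺` and `-2 a` on `A⁻`.
-/

open Pointwise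

namespace LinearMap

variable {M : Type*} [AddCommGroup M] {t : M →ₗ[ℤ] M}

lemma mem_two_smul_top_iff {m : M} :
    m ∈ (2 : ℤ) • (⊤ : Submodule ℤ M) ↔ ∃ x, (2 : ℤ) • x = m := by
  simp [Submodule.mem_smul_pointwise_iff_exists]

lemma ker_sub_id_sup_ker_add_id_le_comap_two_smul_top :
    ker (t - id) ⊔ ker (t + id) ≤ ((2 : ℤ) • ⊤ : Submodule ℤ M).comap (t - id) := by
  refine sup_le (fun a ha => ?_) (fun a ha => ?_) <;>
    rw [Submodule.mem_comap, mem_two_smul_top_iff]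
  · exact ⟨0, by simpa using ha.symm⟩
  · have hsplit : (t - id : M →ₗ[ℤ] M) a = (t + id : M →ₗ[ℤ] M) a - (2 : ℤ) • a := by
      simp only [sub_apply, add_apply, id_apply, two_smul]; abel
    exact ⟨-a, by rw [hsplit, mem_ker.mp ha, smul_neg, zero_sub]⟩

variable [Module.IsTorsionFree ℤ M]

lemma apply_eq_neg_of_two_smul_eq_sub (ht : t ∘ₗ t = id) {a x : M}
    (hx : (2 : ℤ) • x = t a - a) : t x = -x := by
  have htt : t (t a) = a := congrArg (· a) ht
  refine smul_right_injective M (two_ne_zero (α := ℤ)) ?_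
  change (2 : ℤ) • t x = (2 : ℤ) • -x
  rw [← map_smul, hx, map_sub, htt, smul_neg, hx, neg_sub]

lemma comap_two_smul_top_le_ker_sub_id_sup_ker_add_id (ht : t ∘ₗ t = id) :
    ((2 : ℤ) • ⊤ : Submodule ℤ M).comap (t - id) ≤ ker (t - id) ⊔ ker (t + id) := by
  intro a ha
  obtain ⟨x, hx⟩ := mem_two_smul_top_iff.mp ha
  replace hx : (2 : ℤ) • x = t a - a := hx
  have htx := apply_eq_neg_of_two_smul_eq_sub ht hx
  have hta : t a = a + (2 : ℤ) • x := by rw [hx]; abel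
  refine Submodule.mem_sup.mpr ⟨a + x, ?_, -x, ?_, add_neg_cancel_right a x⟩
  · simp only [mem_ker, sub_apply, id_apply, map_add, htx, hta, two_smul]; abel
  · simp [mem_ker, htx]

theorem comap_two_smul_top_eq_ker_sub_id_sup_ker_add_id (ht : t ∘ₗ t = id) :
    ((2 : ℤ) • ⊤ : Submodule ℤ M).comap (t - id) = ker (t - id) ⊔ ker (t + id) :=
  (comap_two_smul_top_le_ker_sub_id_sup_ker_add_id ht).antisymm
    ker_sub_id_sup_ker_add_id_le_comap_two_smul_top

end LinearMap

theorem stmt_2_general (A : Type*) [AddCommGroup A]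
    [Module.Free ℤ A]
    (t : A →ₗ[ℤ] A) (ht : t ∘ₗ t = LinearMap.id)
    (B : Submodule ℤ A)
    (hB : ∀ a : A, a ∈ B ↔ t a - a ∈ (2 : ℤ) • (⊤ : Submodule ℤ A)) :
    B = LinearMap.ker (t - LinearMap.id) ⊔ LinearMap.ker (t + LinearMap.id) := by
  have hB' : B = ((2 : ℤ) • ⊤ : Submodule ℤ A).comap (t - LinearMap.id) :=
    Submodule.ext hB
  rw [hB', LinearMap.comap_two_smul_top_eq_ker_sub_id_sup_ker_add_id ht]

/-- Let `B = {a ∈ A : t(a) - a ∈ 2A}` (so `B/2A` is the fixed-point subspace of `t` on `A/2A`).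
Then `B = A⁺ + A⁻`. -/
theorem stmt_2 (A : Type*) [AddCommGroup A]
    [Module.Free ℤ A] [Module.Finite ℤ A]
    (t : A →ₗ[ℤ] A) (ht : t ∘ₗ t = LinearMap.id)
    (B : Submodule ℤ A)
    (hB : ∀ a : A, a ∈ B ↔ t a - a ∈ (2 : ℤ) • (⊤ : Submodule ℤ A)) :
    B = LinearMap.ker (t - LinearMap.id) ⊔ LinearMap.ker (t + LinearMap.id) :=
  stmt_2_general A t ht B hB
end

section
/- Let L be a lattice (free abelian group of finite rank d) with basis γ₁,…,γ_d and a symmetric bilinear form. With formal series E⁻(-α,z) = exp(Σ_{n>0}(α(-n)/n)zⁿ) = Σ s_{α,n} zⁿ in the symmetric algebra over Q of the graded space ⊕_{n>0} (Q ⊗ L) t^{-n}, the Z-span M(1)_Z of all products s_{α₁,n₁}···s_{α_k,n_k} with αᵢ ∈ L equals the Z-span of such products with each αᵢ restricted to the basis {γ₁,…,γ_d}; in particular s_{-γ_i,n} lies in the Z-span of products of s_{γ_j,m}'s. -/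
/-!
The set of `α ∈ L` all of whose coefficients `s α n` lie in a given subring is an additive
subgroup: it contains `0` since `s 0 = 1`, it is closed under addition by the convolution
identity, and under negation because `s α * s (-α) = s 0 = 1` lets one solve recursively for
`s (-α) n` in terms of `s α` and lower coefficients of `s (-α)`. A subgroup containing a basis
of `L` is all of `L`.
-/

section Coefficients

variable {M L : Type*} [CommRing M] [AddCommGroup L] {s : L → ℕ → M}

theorem coeff_neg_eq_neg_sum (h0 : ∀ α, s α 0 = 1) (hzero : ∀ n : ℕ, 0 < n → s 0 n = 0)
    (hadd : ∀ α β n, s (α + β) n = ∑ i ∈ Finset.range (n + 1), s α i * s β (n - i))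
    (α : L) {n : ℕ} (hn : 0 < n) :
    s (-α) n = -∑ i ∈ Finset.range n, s α (i + 1) * s (-α) (n - (i + 1)) := by
  have key := hadd α (-α) n
  rw [add_neg_cancel, hzero n hn, Finset.sum_range_succ', h0, Nat.sub_zero, one_mul] at key
  linear_combination -key

def coeffAddSubgroup (R : Subring M) (h0 : ∀ α, s α 0 = 1)
    (hzero : ∀ n : ℕ, 0 < n → s 0 n = 0)
    (hadd : ∀ α β n, s (α + β) n = ∑ i ∈ Finset.range (n + 1), s α i * s β (n - i)) :
    AddSubgroup L where
  carrier := {α | ∀ n, s α n ∈ R}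
  zero_mem' := by
    intro n
    rcases Nat.eq_zero_or_pos n with rfl | hn
    · rw [h0]; exact one_mem R
    · rw [hzero n hn]; exact zero_mem R
  add_mem' := fun hα hβ n => by
    rw [hadd]
    exact Subring.sum_mem R fun i _ => mul_mem (hα _) (hβ _)
  neg_mem' := by
    intro α hα n
    induction n using Nat.strong_induction_on with
    | _ n ih =>
      rcases Nat.eq_zero_or_pos n with rfl | hn
      · rw [h0]; exact one_mem R
      · rw [coeff_neg_eq_neg_sum h0 hzero hadd α hn]
        exact neg_mem (Subring.sum_mem R fun i hi => mul_mem (hα _) (ih _ (by omega)))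

end Coefficients

theorem AddSubgroup.eq_top_of_basis_mem {ι L : Type*} [AddCommGroup L] [Module ℤ L]
    (b : Module.Basis ι ℤ L) (S : AddSubgroup L) (hb : ∀ i, b i ∈ S) : S = ⊤ := by
  refine (eq_top_iff' S).2 fun α => ?_
  induction b.mem_span α using Submodule.span_induction with
  | mem x hx => obtain ⟨i, rfl⟩ := hx; exact hb i
  | zero => exact S.zero_mem
  | add x y _ _ hx hy => exact S.add_mem hx hy
  | smul c x _ hx =>
    convert S.zsmul_mem hx c using 1
    exact int_smul_eq_zsmul ‹Module ℤ L› c x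

theorem stmt_12_general (M : Type*) [CommRing M] (L : Type*) [AddCommGroup L] [Module ℤ L]
    (ι : Type*) (b : Module.Basis ι ℤ L)
    (s : L → ℕ → M)
    (h0 : ∀ α, s α 0 = 1)
    (hzero : ∀ n : ℕ, 0 < n → s 0 n = 0)
    (hadd : ∀ α β n, s (α + β) n = ∑ i ∈ Finset.range (n + 1), s α i * s β (n - i)) :
    Subring.closure {x : M | ∃ α n, s α n = x}
      = Subring.closure {x : M | ∃ i n, s (b i) n = x}
    ∧ ∀ (i : ι) (n : ℕ), s (-(b i)) n ∈ Subring.closure {x : M | ∃ i n, s (b i) n = x} := by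
  set R := Subring.closure {x : M | ∃ i n, s (b i) n = x}
  have hall : coeffAddSubgroup R h0 hzero hadd = ⊤ :=
    AddSubgroup.eq_top_of_basis_mem b _ fun i n => Subring.subset_closure ⟨i, n, rfl⟩
  have hmem (α : L) (n : ℕ) : s α n ∈ R := by
    have : α ∈ coeffAddSubgroup R h0 hzero hadd := hall ▸ AddSubgroup.mem_top α
    exact this n
  refine ⟨le_antisymm ?_ ?_, fun i n => hmem _ n⟩
  · rw [Subring.closure_le]
    rintro x ⟨α, n, rfl⟩
    exact hmem α n
  · exact Subring.closure_mono fun x ⟨i, n, hx⟩ => ⟨b i, n, hx⟩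

/-- In a commutative ring `M` (modeling the Heisenberg VOA `M(1)`) with elements
`s α n` (the coefficients of `E⁻(-α,z)`) satisfying `s α 0 = 1`, `s 0 n = 0` for `n > 0`,
and the convolution identity `s (α+β) n = Σ_{i+j=n} (s α i)(s β j)`:
the `ℤ`-span `M(1)_ℤ` of all products of the `s α n` (`α ∈ L`) equals the `ℤ`-span of
products of `s` at the basis elements `γᵢ` only; in particular each `s (-γᵢ) n` lies in
the latter. -/
theorem stmt_12 (M : Type*) [CommRing M] (L : Type*) [AddCommGroup L] [Module ℤ L]
    (ι : Type*) [Fintype ι] (b : Module.Basis ι ℤ L)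
    (s : L → ℕ → M)
    (h0 : ∀ α, s α 0 = 1)
    (hzero : ∀ n : ℕ, 0 < n → s 0 n = 0)
    (hadd : ∀ α β n, s (α + β) n = ∑ i ∈ Finset.range (n + 1), s α i * s β (n - i)) :
    Subring.closure {x : M | ∃ α n, s α n = x}
      = Subring.closure {x : M | ∃ i n, s (b i) n = x}
    ∧ ∀ (i : ι) (n : ℕ), s (-(b i)) n ∈ Subring.closure {x : M | ∃ i n, s (b i) n = x} :=
  stmt_12_general M L ι b s h0 hzero hadd
end
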